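/- arXiv:2405.06253 — 2 statements merged into one kernel-verified Lean document; each statement's English description precedes it below -/
import Mathlib

section
/- Consider an N-player game with strategy sets K_i ⊆ ℝ^{n_i} and cost functions f_i, and assume 0 ∈ K and each K_i is symmetric (x ∈ K_i implies −x ∈ K_i). Then the game is a potential game if and only if h_P(z, y) = h_P(0, z+y) − h_P(0, z) for all z ∈ K and all y with z+y ∈ K; moreover, in that case the function φ(z) = C − h_P(z, −z) (for any constant C) is a potential function of the game. -/
noncomputable section

/-- The set of joint strategy profiles of a game with strategy sets `K i ⊆ ℝ^{n i}`. -/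
def jointK {N : ℕ} {n : Fin N → ℕ}
    (K : ∀ i, Set (EuclideanSpace ℝ (Fin (n i)))) :
    Set (∀ i, EuclideanSpace ℝ (Fin (n i))) :=
  {x | ∀ i, x i ∈ K i}

/-- `φ` is an exact potential function for the game with strategy sets `K` and costs `f`. -/
def IsPotential {N : ℕ} {n : Fin N → ℕ}
    (K : ∀ i, Set (EuclideanSpace ℝ (Fin (n i))))
    (f : Fin N → (∀ i, EuclideanSpace ℝ (Fin (n i))) → ℝ)
    (φ : (∀ i, EuclideanSpace ℝ (Fin (n i))) → ℝ) : Prop :=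
  ∀ i : Fin N, ∀ x ∈ jointK K, ∀ xi' ∈ K i,
    f i (Function.update x i xi') - f i x = φ (Function.update x i xi') - φ x

/-- The game is a potential game. -/
def IsPotentialGame {N : ℕ} {n : Fin N → ℕ}
    (K : ∀ i, Set (EuclideanSpace ℝ (Fin (n i))))
    (f : Fin N → (∀ i, EuclideanSpace ℝ (Fin (n i))) → ℝ) : Prop :=
  ∃ φ, IsPotential K f φ

/-- The point on the path from `z` to `z + y` whose first `m` blocks are `z j + y j`
and whose remaining blocks are `z j`. -/
def upTo {N : ℕ} {n : Fin N → ℕ}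
    (z y : ∀ i, EuclideanSpace ℝ (Fin (n i))) (m : ℕ) :
    ∀ i, EuclideanSpace ℝ (Fin (n i)) :=
  fun j => if (j : ℕ) < m then z j + y j else z j

/-- `hP f z y` : the sum of the players' incremental cost differences along the path
`z → (z₁+y₁, z₋₁) → (z₁+y₁, z₂+y₂, …) → ⋯ → z+y`. -/
def hP {N : ℕ} {n : Fin N → ℕ}
    (f : Fin N → (∀ i, EuclideanSpace ℝ (Fin (n i))) → ℝ)
    (z y : ∀ i, EuclideanSpace ℝ (Fin (n i))) : ℝ :=
  ∑ i : Fin N, (f i (upTo z y ((i : ℕ) + 1)) - f i (upTo z y (i : ℕ)))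

/-!
Each step of the path `z → … → z + y` defining `h_P` is a unilateral deviation, so for a potential
`φ` the increments telescope to `h_P(z, y) = φ(z + y) − φ(z)`; the identity follows, and
`h_P(z, −z) = φ(0) − φ(z)` shows that `C − h_P(z, −z)` differs from `φ` by a constant. Conversely,
when the path has a single moving block, `h_P(x, y)` is one player's deviation cost, and the
identity turns this into `h_P(0, x + y) − h_P(0, x)`: so `h_P(0, ·)` is a potential.
-/

section Path

variable {N : ℕ} {n : Fin N → ℕ}

lemma upTo_zero (z y : ∀ i, EuclideanSpace ℝ (Fin (n i))) : upTo z y 0 = z := by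
  funext j
  simp [upTo]

lemma upTo_self_length (z y : ∀ i, EuclideanSpace ℝ (Fin (n i))) : upTo z y N = z + y := by
  funext j
  simp [upTo, j.isLt]

lemma upTo_succ (z y : ∀ i, EuclideanSpace ℝ (Fin (n i))) (i : Fin N) :
    upTo z y (i + 1) = Function.update (upTo z y i) i (z i + y i) := by
  funext j
  rcases eq_or_ne j i with rfl | hji
  · simp [upTo]
  · have : (j : ℕ) ≠ i := Fin.val_ne_of_ne hji
    simp only [upTo, Function.update_of_ne hji]
    split_ifs <;> first | rfl | omega

lemma upTo_update_zero (x : ∀ i, EuclideanSpace ℝ (Fin (n i))) (i : Fin N)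
    (v : EuclideanSpace ℝ (Fin (n i))) (m : ℕ) :
    upTo x (Function.update 0 i v) m =
      if (i : ℕ) < m then Function.update x i (x i + v) else x := by
  funext j
  rcases eq_or_ne j i with rfl | hji
  · split_ifs <;> simp [upTo, *]
  · split_ifs <;> simp [upTo, Function.update_of_ne hji]

lemma hP_update_zero (f : Fin N → (∀ i, EuclideanSpace ℝ (Fin (n i))) → ℝ)
    (x : ∀ i, EuclideanSpace ℝ (Fin (n i))) (i : Fin N) (v : EuclideanSpace ℝ (Fin (n i))) :
    hP f x (Function.update 0 i v) = f i (Function.update x i (x i + v)) - f i x := by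
  rw [hP, Finset.sum_eq_single i]
  · simp only [upTo_update_zero, lt_add_one, lt_irrefl, if_true, if_false]
  · intro j _ hji
    have : (i : ℕ) < j + 1 ↔ (i : ℕ) < j := by
      have := Fin.val_ne_of_ne hji
      omega
    simp only [upTo_update_zero, this, sub_self]
  · exact fun h => absurd (Finset.mem_univ i) h

end Path

section Membership

variable {N : ℕ} {n : Fin N → ℕ} {K : ∀ i, Set (EuclideanSpace ℝ (Fin (n i)))}

lemma upTo_mem_jointK {z y : ∀ i, EuclideanSpace ℝ (Fin (n i))} (hz : z ∈ jointK K)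
    (hzy : z + y ∈ jointK K) (m : ℕ) : upTo z y m ∈ jointK K := by
  intro j
  unfold upTo
  split_ifs
  · exact hzy j
  · exact hz j

lemma update_mem_jointK {x : ∀ i, EuclideanSpace ℝ (Fin (n i))} (hx : x ∈ jointK K) {i : Fin N}
    {v : EuclideanSpace ℝ (Fin (n i))} (hv : v ∈ K i) : Function.update x i v ∈ jointK K := by
  intro j
  rcases eq_or_ne j i with rfl | hji
  · simpa using hv
  · simpa [Function.update_of_ne hji] using hx j

end Membership

namespace IsPotential

variable {N : ℕ} {n : Fin N → ℕ} {K : ∀ i, Set (EuclideanSpace ℝ (Fin (n i)))}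
  {f : Fin N → (∀ i, EuclideanSpace ℝ (Fin (n i))) → ℝ} {φ : (∀ i, EuclideanSpace ℝ (Fin (n i))) → ℝ}

lemma hP_eq_sub (hφ : IsPotential K f φ) {z y : ∀ i, EuclideanSpace ℝ (Fin (n i))}
    (hz : z ∈ jointK K) (hzy : z + y ∈ jointK K) : hP f z y = φ (z + y) - φ z := by
  have step (i : Fin N) : f i (upTo z y (i + 1)) - f i (upTo z y i) =
      φ (upTo z y (i + 1)) - φ (upTo z y i) := by
    rw [upTo_succ]
    exact hφ i _ (upTo_mem_jointK hz hzy i) _ (hzy i)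
  rw [hP, Finset.sum_congr rfl fun i _ => step i,
    Fin.sum_univ_eq_sum_range (fun m => φ (upTo z y (m + 1)) - φ (upTo z y m)),
    Finset.sum_range_sub (fun m => φ (upTo z y m)), upTo_zero, upTo_self_length]

lemma hP_zero_eq_sub (hφ : IsPotential K f φ) (h0 : 0 ∈ jointK K)
    {z : ∀ i, EuclideanSpace ℝ (Fin (n i))} (hz : z ∈ jointK K) : hP f 0 z = φ z - φ 0 := by
  simpa using hφ.hP_eq_sub h0 (by rwa [zero_add])

lemma hP_neg_eq_sub (hφ : IsPotential K f φ) (h0 : 0 ∈ jointK K)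
    {z : ∀ i, EuclideanSpace ℝ (Fin (n i))} (hz : z ∈ jointK K) : hP f z (-z) = φ 0 - φ z := by
  have := hφ.hP_eq_sub hz (y := -z) (by rwa [add_neg_cancel])
  rwa [add_neg_cancel] at this

lemma of_eq_add_const (hφ : IsPotential K f φ) {ψ : (∀ i, EuclideanSpace ℝ (Fin (n i))) → ℝ}
    (c : ℝ) (hψ : ∀ x ∈ jointK K, ψ x = φ x + c) : IsPotential K f ψ := by
  intro i x hx v hv
  rw [hψ _ (update_mem_jointK hx hv), hψ x hx, hφ i x hx v hv]
  ring

end IsPotential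

lemma isPotential_hP_zero {N : ℕ} {n : Fin N → ℕ} {K : ∀ i, Set (EuclideanSpace ℝ (Fin (n i)))}
    {f : Fin N → (∀ i, EuclideanSpace ℝ (Fin (n i))) → ℝ}
    (h : ∀ z ∈ jointK K, ∀ y, z + y ∈ jointK K → hP f z y = hP f 0 (z + y) - hP f 0 z) :
    IsPotential K f (hP f 0) := by
  intro i x hx v hv
  have hxy : x + Function.update (0 : ∀ j, EuclideanSpace ℝ (Fin (n j))) i (v - x i) =
      Function.update x i v := by
    funext j
    rcases eq_or_ne j i with rfl | hji
    · simp
    · simp [Function.update_of_ne hji]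
  have := h x hx _ (hxy ▸ update_mem_jointK hx hv)
  rwa [hP_update_zero, add_sub_cancel, hxy] at this

theorem stmt6_general {N : ℕ} {n : Fin N → ℕ}
    (K : ∀ i, Set (EuclideanSpace ℝ (Fin (n i))))
    (f : Fin N → (∀ i, EuclideanSpace ℝ (Fin (n i))) → ℝ)
    (h0 : (0 : ∀ i, EuclideanSpace ℝ (Fin (n i))) ∈ jointK K) :
    (IsPotentialGame K f ↔
      ∀ z ∈ jointK K, ∀ y : ∀ i, EuclideanSpace ℝ (Fin (n i)),
        z + y ∈ jointK K → hP f z y = hP f 0 (z + y) - hP f 0 z)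
    ∧ (IsPotentialGame K f →
        ∀ C : ℝ, IsPotential K f (fun z => C - hP f z (-z))) := by
  refine ⟨⟨?_, fun h => ⟨hP f 0, isPotential_hP_zero h⟩⟩, ?_⟩
  · rintro ⟨φ, hφ⟩ z hz y hzy
    rw [hφ.hP_eq_sub hz hzy, hφ.hP_zero_eq_sub h0 hzy, hφ.hP_zero_eq_sub h0 hz]
    ring
  · rintro ⟨φ, hφ⟩ C
    refine hφ.of_eq_add_const (C - φ 0) fun z hz => ?_
    rw [hφ.hP_neg_eq_sub h0 hz]
    ring

/-- If `0 ∈ K` and each `K i` is symmetric, the game is a potential game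
iff `h_P(z,y) = h_P(0,z+y) − h_P(0,z)` on `K`; moreover, in that case
`φ(z) = C − h_P(z,−z)` is a potential function (for any constant `C`). -/
theorem stmt6 {N : ℕ} {n : Fin N → ℕ}
    (K : ∀ i, Set (EuclideanSpace ℝ (Fin (n i))))
    (f : Fin N → (∀ i, EuclideanSpace ℝ (Fin (n i))) → ℝ)
    (h0 : (0 : ∀ i, EuclideanSpace ℝ (Fin (n i))) ∈ jointK K)
    (hsym : ∀ i, ∀ v ∈ K i, -v ∈ K i) :
    (IsPotentialGame K f ↔
      ∀ z ∈ jointK K, ∀ y : ∀ i, EuclideanSpace ℝ (Fin (n i)),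
        z + y ∈ jointK K → hP f z y = hP f 0 (z + y) - hP f 0 z)
    ∧ (IsPotentialGame K f →
        ∀ C : ℝ, IsPotential K f (fun z => C - hP f z (-z))) :=
  stmt6_general K f h0
end
end

section
/- Let an N-player potential game with N = 2k even (k ≥ 1) have strategy sets K_i ⊆ ℝ^{n_i} with 0 ∈ K and each K_i symmetric, and let φ be a potential function. Then for every z ∈ K, φ(z) = φ(0) + h_{P₂}(0, (z_1, z_2)) + Σ_{i=2}^{k} h_{2i−1,2i}(0, 0, z_{2i−1}, z_{2i}; ẑ_{2i−2}), where ẑ_m = (z_1, …, z_m, 0, …, 0), h_{P₂}(0, (z_1,z_2)) = [f_1(z_1, 0, …, 0) − f_1(0)] + [f_2(z_1, z_2, 0, …, 0) − f_2(z_1, 0, …, 0)], and h_{ij} is the pairwise incremental cost difference function. -/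
noncomputable section

/-- `hij f i j z yi yj` : the pairwise incremental cost difference
`f_i(z_i+y_i, z_j; z₋) − f_i(z_i, z_j; z₋) + f_j(z_j+y_j, z_i+y_i; z₋) − f_j(z_j, z_i+y_i; z₋)`. -/
def hij {N : ℕ} {n : Fin N → ℕ}
    (f : Fin N → (∀ k, EuclideanSpace ℝ (Fin (n k))) → ℝ)
    (i j : Fin N) (z : ∀ k, EuclideanSpace ℝ (Fin (n k)))
    (yi : EuclideanSpace ℝ (Fin (n i))) (yj : EuclideanSpace ℝ (Fin (n j))) : ℝ :=
  f i (Function.update z i (z i + yi)) - f i z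
    + f j (Function.update (Function.update z i (z i + yi)) j (z j + yj))
    - f j (Function.update z i (z i + yi))

/-- `trunc z m` : the profile `ẑ_m = (z_1, …, z_m, 0, …, 0)`. -/
def trunc {N : ℕ} {n : Fin N → ℕ}
    (z : ∀ k, EuclideanSpace ℝ (Fin (n k))) (m : ℕ) :
    ∀ k, EuclideanSpace ℝ (Fin (n k)) :=
  fun j => if (j : ℕ) < m then z j else 0

/- Along the chain 0 = ẑ_0, ẑ_1, …, ẑ_N = z each step changes only player m's strategy,
so the potential property turns the increment φ(ẑ_{m+1}) − φ(ẑ_m) into player m's cost increment.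
Grouping these increments in consecutive pairs gives the terms h_{P₂} and h_{2i−1,2i}, and the sum
telescopes to φ(z) − φ(0). -/

theorem Finset.sum_Icc_add_one_sub_pred {M : Type*} [AddCommGroup M] (g : ℕ → M) {m n : ℕ}
    (h : m ≤ n) : ∑ i ∈ Icc (m + 1) n, (g i - g (i - 1)) = g n - g m := by
  induction n, h using Nat.le_induction with
  | base => simp
  | succ n hmn ih =>
    rw [sum_Icc_succ_top (by omega), ih, Nat.add_sub_cancel]
    abel

section Truncation

variable {N : ℕ} {n : Fin N → ℕ}

lemma trunc_zero (z : ∀ k, EuclideanSpace ℝ (Fin (n k))) : trunc z 0 = 0 := by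
  funext j
  simp [trunc]

lemma trunc_of_le (z : ∀ k, EuclideanSpace ℝ (Fin (n k))) {m : ℕ} (hm : N ≤ m) :
    trunc z m = z := by
  funext j
  simp [trunc, j.isLt.trans_le hm]

lemma trunc_apply_of_le (z : ∀ k, EuclideanSpace ℝ (Fin (n k))) {m : ℕ} {j : Fin N}
    (h : m ≤ j) : trunc z m j = 0 := by
  simp [trunc, Nat.not_lt.mpr h]

lemma update_trunc_self (z : ∀ k, EuclideanSpace ℝ (Fin (n k))) (i : Fin N) :
    Function.update (trunc z i) i (z i) = trunc z (i + 1) := by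
  funext j
  rcases eq_or_ne j i with rfl | hji
  · simp [trunc]
  · have hji' : (j : ℕ) ≠ i := Fin.val_ne_of_ne hji
    simp only [Function.update_of_ne hji, trunc]
    split_ifs <;> first | rfl | omega

lemma trunc_mem_jointK {K : ∀ i, Set (EuclideanSpace ℝ (Fin (n i)))}
    {z : ∀ k, EuclideanSpace ℝ (Fin (n k))} (h0 : (0 : ∀ i, EuclideanSpace ℝ (Fin (n i))) ∈ jointK K)
    (hz : z ∈ jointK K) (m : ℕ) : trunc z m ∈ jointK K := by
  intro j
  unfold trunc
  split_ifs
  · exact hz j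
  · exact h0 j

end Truncation

namespace IsPotential

variable {N : ℕ} {n : Fin N → ℕ} {K : ∀ i, Set (EuclideanSpace ℝ (Fin (n i)))}
  {f : Fin N → (∀ i, EuclideanSpace ℝ (Fin (n i))) → ℝ} {φ : (∀ i, EuclideanSpace ℝ (Fin (n i))) → ℝ}
  {z : ∀ k, EuclideanSpace ℝ (Fin (n k))}

lemma cost_sub_trunc (hφ : IsPotential K f φ)
    (h0 : (0 : ∀ i, EuclideanSpace ℝ (Fin (n i))) ∈ jointK K) (hz : z ∈ jointK K) (i : Fin N) :
    f i (trunc z (i + 1)) - f i (trunc z i) = φ (trunc z (i + 1)) - φ (trunc z i) := by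
  simpa only [update_trunc_self] using hφ i (trunc z i) (trunc_mem_jointK h0 hz i) (z i) (hz i)

lemma hij_trunc (hφ : IsPotential K f φ)
    (h0 : (0 : ∀ i, EuclideanSpace ℝ (Fin (n i))) ∈ jointK K) (hz : z ∈ jointK K)
    {i j : Fin N} (hji : (j : ℕ) = i + 1) :
    hij f i j (trunc z i) (z i) (z j) = φ (trunc z (j + 1)) - φ (trunc z i) := by
  have hi : trunc z i i = 0 := trunc_apply_of_le z le_rfl
  have hj : trunc z i j = 0 := trunc_apply_of_le z (by omega)
  have step_i := hφ.cost_sub_trunc h0 hz i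
  have step_j := hφ.cost_sub_trunc h0 hz j
  rw [← hji] at step_i
  unfold hij
  rw [hi, hj, zero_add, zero_add, update_trunc_self, ← hji, update_trunc_self]
  linarith

end IsPotential

-- Players are `1`-indexed in the informal statement; here player `m` is index `m−1`.
/-- In a potential game with an even number `N = 2k` of players
(`k ≥ 1`), with `0 ∈ K` and symmetric strategy sets, every potential function `φ`
satisfies
`φ(z) = φ(0) + h_{P₂}(0,(z₁,z₂)) + ∑_{i=2}^{k} h_{2i−1,2i}(0,0,z_{2i−1},z_{2i};ẑ_{2i−2})`.
(Players are `1`-indexed in the informal statement; here player `m` is index `m−1`.) -/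
theorem stmt11 {N k : ℕ} {n : Fin N → ℕ} (hN : N = 2 * k) (hk : 1 ≤ k)
    (K : ∀ i, Set (EuclideanSpace ℝ (Fin (n i))))
    (f : Fin N → (∀ i, EuclideanSpace ℝ (Fin (n i))) → ℝ)
    (h0 : (0 : ∀ i, EuclideanSpace ℝ (Fin (n i))) ∈ jointK K)
    (φ : (∀ i, EuclideanSpace ℝ (Fin (n i))) → ℝ)
    (hφ : IsPotential K f φ) :
    ∀ z ∈ jointK K,
      φ z = φ 0
        + ((f ⟨0, by omega⟩ (trunc z 1) - f ⟨0, by omega⟩ (trunc z 0))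
            + (f ⟨1, by omega⟩ (trunc z 2) - f ⟨1, by omega⟩ (trunc z 1)))
        + ∑ i ∈ (Finset.Icc 2 k).attach,
            hij f ⟨2 * i.1 - 2, by have := Finset.mem_Icc.mp i.2; omega⟩
                  ⟨2 * i.1 - 1, by have := Finset.mem_Icc.mp i.2; omega⟩
                  (trunc z (2 * i.1 - 2))
                  (z ⟨2 * i.1 - 2, by have := Finset.mem_Icc.mp i.2; omega⟩)
                  (z ⟨2 * i.1 - 1, by have := Finset.mem_Icc.mp i.2; omega⟩) := by
  intro z hz
  have first_pair :
      (f ⟨0, by omega⟩ (trunc z 1) - f ⟨0, by omega⟩ (trunc z 0))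
        + (f ⟨1, by omega⟩ (trunc z 2) - f ⟨1, by omega⟩ (trunc z 1))
        = φ (trunc z 2) - φ (trunc z 0) := by
    linarith [hφ.cost_sub_trunc h0 hz ⟨0, by omega⟩, hφ.cost_sub_trunc h0 hz ⟨1, by omega⟩]
  have later_pairs : ∑ i ∈ (Finset.Icc 2 k).attach,
      hij f ⟨2 * i.1 - 2, by have := Finset.mem_Icc.mp i.2; omega⟩
            ⟨2 * i.1 - 1, by have := Finset.mem_Icc.mp i.2; omega⟩
            (trunc z (2 * i.1 - 2))
            (z ⟨2 * i.1 - 2, by have := Finset.mem_Icc.mp i.2; omega⟩)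
            (z ⟨2 * i.1 - 1, by have := Finset.mem_Icc.mp i.2; omega⟩)
      = ∑ i ∈ Finset.Icc 2 k, (φ (trunc z (2 * i)) - φ (trunc z (2 * (i - 1)))) := by
    rw [← Finset.sum_attach (Finset.Icc 2 k)]
    refine Finset.sum_congr rfl fun i _ => ?_
    have hi := Finset.mem_Icc.mp i.2
    rw [hφ.hij_trunc h0 hz (by simp only; omega)]
    congr 3 <;> simp only <;> omega
  rw [later_pairs, Finset.sum_Icc_add_one_sub_pred (fun m => φ (trunc z (2 * m))) hk, first_pair,
    trunc_zero, ← hN, trunc_of_le z le_rfl]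
  ring
end
end
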